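/- Under the conditions of the nonconventional strong Borel–Cantelli theorem (ψ-mixing with summable coefficient, Assumption 2.1(i)), the difference |∑_{n=1}^N P(⋂_{i=1}^ℓ Γ_{q_i(n)}) − ∑_{n=1}^N ∏_{i=1}^ℓ P(Γ_{q_i(n)})| is bounded by a constant C < ∞ uniformly in N; consequently if ∑_{n=1}^N ∏_{i=1}^ℓ P(Γ_{q_i(n)}) → ∞ then the ratio of the two sums tends to 1. -/

import Mathlib

open MeasureTheory Filter Asymptotics

/-
Peel off the event with the smallest index: by ψ-mixing across the gap `k` to the remaining ones,
this costs at most `ψ k`, and `k = q_j(n) - q_i(n)` for some pair `i ≠ j`. Hence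
`|P(⋂ᵢ Γ_{q_i(n)}) - ∏ᵢ P(Γ_{q_i(n)})| ≤ ∑_{i ≠ j} ψ(|q_i(n) - q_j(n)|)`, plus `1` when some
`q_i(n) = 0`. Each difference `q_i(n) - q_j(n)` takes a given value for at most `K` indices `n`,
so summing over `n ≤ N` gives at most `K ∑_{z ∈ ℤ} ψ(|z|)` per pair, uniformly in `N`. A bounded
difference over a divergent denominator forces the ratio to `1`.
-/

theorem tendsto_div_nhds_one_of_abs_sub_le {α : Type*} {l : Filter α} {u v : α → ℝ} {C : ℝ}
    (huv : ∀ x, |u x - v x| ≤ C) (hv : Tendsto v l atTop) :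
    Tendsto (fun x => u x / v x) l (nhds 1) := by
  have hsub : (u - v) =O[l] (fun _ => (1 : ℝ)) :=
    isBigO_of_le' l fun x => by simpa using huv x
  have hone : (fun _ => (1 : ℝ)) =o[l] v :=
    (isLittleO_one_left_iff ℝ).2 (tendsto_abs_atTop_atTop.comp hv)
  exact (isEquivalent_iff_tendsto_one (hv.eventually_ne_atTop 0)).1 (hsub.trans_isLittleO hone)

theorem sum_comp_le_mul_tsum {α β : Type*} (f : α → β) {D : β → ℝ} (hD₀ : 0 ≤ D)
    (hD : Summable D) {M : ℕ}
    (hf : ∀ b, {a | f a = b}.Finite ∧ {a | f a = b}.ncard ≤ M) (T : Finset α) :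
    ∑ a ∈ T, D (f a) ≤ M * ∑' b, D b := by
  classical
  have hfiber : ∀ b, (T.filter (f · = b)).card ≤ M := fun b => by
    rw [← Set.ncard_coe_finset]
    exact (Set.ncard_le_ncard (fun a ha => (Finset.mem_filter.1 ha).2) (hf b).1).trans (hf b).2
  calc ∑ a ∈ T, D (f a) = ∑ b ∈ T.image f, (T.filter (f · = b)).card • D b := Finset.sum_comp D f
    _ ≤ ∑ b ∈ T.image f, M * D b := by
        gcongr with b
        rw [nsmul_eq_mul]
        exact mul_le_mul_of_nonneg_right (by exact_mod_cast hfiber b) (hD₀ b)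
    _ = M * ∑ b ∈ T.image f, D b := (Finset.mul_sum ..).symm
    _ ≤ M * ∑' b, D b := by
        gcongr
        exact hD.sum_le_tsum _ fun b _ => hD₀ b

section

variable {Ω : Type*} [MeasurableSpace Ω]

/-- `F_{1,m}`. -/
abbrev IsPsiMixing.past (Γ : ℕ → Set Ω) (m : ℕ) : MeasurableSpace Ω :=
  MeasurableSpace.generateFrom {S | ∃ j : ℕ, 1 ≤ j ∧ j ≤ m ∧ S = Γ j}

/-- `F_{m,∞}`. -/
abbrev IsPsiMixing.future (Γ : ℕ → Set Ω) (m : ℕ) : MeasurableSpace Ω :=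
  MeasurableSpace.generateFrom {S | ∃ j : ℕ, m ≤ j ∧ S = Γ j}

def IsPsiMixing (μ : Measure Ω) (Γ : ℕ → Set Ω) (ψ : ℕ → ℝ) : Prop :=
  ∀ (m k : ℕ) (A B : Set Ω), MeasurableSet[IsPsiMixing.past Γ m] A →
    MeasurableSet[IsPsiMixing.future Γ (m + k)] B →
    μ A ≠ 0 → μ B ≠ 0 → |μ.real (A ∩ B) / (μ.real A * μ.real B) - 1| ≤ ψ k

end

namespace IsPsiMixing

variable {Ω : Type*} [MeasurableSpace Ω] {μ : Measure Ω} {Γ : ℕ → Set Ω} {ψ : ℕ → ℝ}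

theorem mono (h : IsPsiMixing μ Γ ψ) {ψ' : ℕ → ℝ} (hψ : ∀ k, ψ k ≤ ψ' k) :
    IsPsiMixing μ Γ ψ' :=
  fun m k A B hA hB hA₀ hB₀ => (h m k A B hA hB hA₀ hB₀).trans (hψ k)

variable [IsProbabilityMeasure μ]

theorem abs_measureReal_inter_sub_mul_le (h : IsPsiMixing μ Γ ψ) {m k : ℕ} (hψ : 0 ≤ ψ k)
    {A B : Set Ω} (hA : MeasurableSet[past Γ m] A) (hB : MeasurableSet[future Γ (m + k)] B) :
    |μ.real (A ∩ B) - μ.real A * μ.real B| ≤ ψ k := by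
  by_cases hA₀ : μ A = 0
  · simp [measure_mono_null Set.inter_subset_left hA₀, Measure.real, hA₀, hψ]
  by_cases hB₀ : μ B = 0
  · simp [measure_mono_null Set.inter_subset_right hB₀, Measure.real, hB₀, hψ]
  have hAB : 0 < μ.real A * μ.real B :=
    mul_pos (ENNReal.toReal_pos hA₀ (measure_ne_top μ A))
      (ENNReal.toReal_pos hB₀ (measure_ne_top μ B))
  have hAB₁ : μ.real A * μ.real B ≤ 1 :=
    mul_le_one₀ measureReal_le_one measureReal_nonneg measureReal_le_one
  have := h m k A B hA hB hA₀ hB₀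
  rw [div_sub_one hAB.ne', abs_div, abs_of_pos hAB, div_le_iff₀ hAB] at this
  nlinarith

theorem abs_measureReal_biInter_sub_prod_le (h : IsPsiMixing μ Γ ψ) (hψ : ∀ k, 0 ≤ ψ k)
    {ι : Type*} [DecidableEq ι] (v : ι → ℕ) (s : Finset ι) (hv : ∀ i ∈ s, 1 ≤ v i) :
    |μ.real (⋂ i ∈ s, Γ (v i)) - ∏ i ∈ s, μ.real (Γ (v i))| ≤
      ∑ p ∈ s.offDiag, ψ ((v p.1 : ℤ) - v p.2).natAbs := by
  induction s using Finset.induction_on_min_value v with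
  | empty => simp
  | insert a t hat hmin ih =>
    -- `Γ (v a)` lies in the past of the others across the gap `v j - v a` to the nearest one,
    -- and the pair `(j, a)` of `(insert a t).offDiag` pays for this mixing step.
    rw [Finset.set_biInter_insert, Finset.prod_insert hat]
    rcases t.eq_empty_or_nonempty with rfl | ht
    · simp
    obtain ⟨j, hj, hjmin⟩ := t.exists_min_image v ht
    set B := ⋂ i ∈ t, Γ (v i)
    have hA : MeasurableSet[past Γ (v a)] (Γ (v a)) :=
      MeasurableSpace.measurableSet_generateFrom
        ⟨v a, hv a (Finset.mem_insert_self a t), le_rfl, rfl⟩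
    have hB : MeasurableSet[future Γ (v a + (v j - v a))] B :=
      .biInter t.countable_toSet fun i hi => MeasurableSpace.measurableSet_generateFrom
        ⟨v i, by have := hmin j hj; have := hjmin i hi; omega, rfl⟩
    have hstep := h.abs_measureReal_inter_sub_mul_le (hψ _) hA hB
    have hrest := ih fun i hi => hv i (Finset.mem_insert_of_mem hi)
    have hgap : ((v j : ℤ) - v a).natAbs = v j - v a := by have := hmin j hj; omega
    have hja : (j, a) ∉ t.offDiag := by simp [hat]
    have hsub : insert (j, a) t.offDiag ⊆ (insert a t).offDiag := by
      intro p hp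
      simp only [Finset.mem_insert, Finset.mem_offDiag] at hp ⊢
      rcases hp with rfl | hp
      · exact ⟨Or.inr hj, Or.inl rfl, ne_of_mem_of_not_mem hj hat⟩
      · exact ⟨Or.inr hp.1, Or.inr hp.2.1, hp.2.2⟩
    have hfactor : |μ.real (Γ (v a)) * (μ.real B - ∏ i ∈ t, μ.real (Γ (v i)))| ≤
        |μ.real B - ∏ i ∈ t, μ.real (Γ (v i))| := by
      rw [abs_mul, abs_of_nonneg measureReal_nonneg]
      exact mul_le_of_le_one_left (abs_nonneg _) measureReal_le_one
    calc |μ.real (Γ (v a) ∩ B) - μ.real (Γ (v a)) * ∏ i ∈ t, μ.real (Γ (v i))|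
        ≤ |μ.real (Γ (v a) ∩ B) - μ.real (Γ (v a)) * μ.real B| +
            |μ.real (Γ (v a)) * (μ.real B - ∏ i ∈ t, μ.real (Γ (v i)))| := by
          rw [mul_sub]
          exact abs_sub_le _ _ _
      _ ≤ ψ (v j - v a) + ∑ p ∈ t.offDiag, ψ ((v p.1 : ℤ) - v p.2).natAbs :=
          add_le_add hstep (hfactor.trans hrest)
      _ = ∑ p ∈ insert (j, a) t.offDiag, ψ ((v p.1 : ℤ) - v p.2).natAbs := by
          rw [Finset.sum_insert hja, hgap]
      _ ≤ ∑ p ∈ (insert a t).offDiag, ψ ((v p.1 : ℤ) - v p.2).natAbs :=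
          Finset.sum_le_sum_of_subset_of_nonneg hsub fun p _ _ => hψ _

/-- `Γ 0` generates no `past` σ-algebra, so an index `v i = 0` is only bounded crudely, by `1`. -/
theorem abs_measureReal_iInter_sub_prod_le (h : IsPsiMixing μ Γ ψ) (hψ : ∀ k, 0 ≤ ψ k)
    {ι : Type*} [Fintype ι] [DecidableEq ι] (v : ι → ℕ) :
    |μ.real (⋂ i, Γ (v i)) - ∏ i, μ.real (Γ (v i))| ≤
      ∑ i, (if v i = 0 then 1 else 0) +
        ∑ p ∈ Finset.univ.offDiag, ψ ((v p.1 : ℤ) - v p.2).natAbs := by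
  have hzero : 0 ≤ ∑ i, (if v i = 0 then (1 : ℝ) else 0) :=
    Finset.sum_nonneg fun i _ => by positivity
  by_cases hv : ∀ i, 1 ≤ v i
  · have := h.abs_measureReal_biInter_sub_prod_le hψ v Finset.univ fun i _ => hv i
    simp only [Finset.mem_univ, Set.iInter_true] at this
    linarith
  · obtain ⟨i, hi⟩ : ∃ i, v i = 0 := by
      simpa [Nat.one_le_iff_ne_zero] using hv
    have hpairs : 0 ≤ ∑ p ∈ Finset.univ.offDiag, ψ ((v p.1 : ℤ) - v p.2).natAbs :=
      Finset.sum_nonneg fun p _ => hψ _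
    have hone : 1 ≤ ∑ i, (if v i = 0 then (1 : ℝ) else 0) := by
      simpa [hi] using Finset.single_le_sum (f := fun i => if v i = 0 then (1 : ℝ) else 0)
        (fun i _ => by positivity) (Finset.mem_univ i)
    have : |μ.real (⋂ i, Γ (v i)) - ∏ i, μ.real (Γ (v i))| ≤ 1 :=
      abs_sub_le_of_nonneg_of_le measureReal_nonneg measureReal_le_one
      (Finset.prod_nonneg fun i _ => measureReal_nonneg)
      (Finset.prod_le_one (fun i _ => measureReal_nonneg) fun i _ => measureReal_le_one)
    linarith

theorem abs_sum_measureReal_iInter_sub_sum_prod_le (h : IsPsiMixing μ Γ ψ) (hψ : ∀ k, 0 ≤ ψ k)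
    (hψs : Summable ψ) {ι : Type*} [Fintype ι] [DecidableEq ι] (q : ι → ℕ → ℕ) {K : ℕ}
    (hq1 : ∀ i j : ι, i ≠ j → ∀ k : ℤ,
      {n : ℕ | (q i n : ℤ) - (q j n : ℤ) = k}.Finite ∧
      {n : ℕ | (q i n : ℤ) - (q j n : ℤ) = k}.ncard ≤ K)
    (hq2 : ∀ (i : ι) (k : ℕ), {n : ℕ | q i n = k}.Finite ∧ {n : ℕ | q i n = k}.ncard ≤ K)
    (T : Finset ℕ) :
    |∑ n ∈ T, μ.real (⋂ i, Γ (q i n)) - ∑ n ∈ T, ∏ i, μ.real (Γ (q i n))| ≤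
      Fintype.card ι * K +
        (Finset.univ : Finset ι).offDiag.card * K * ∑' z : ℤ, ψ z.natAbs := by
  have hδ : Summable fun k : ℕ => if k = 0 then (1 : ℝ) else 0 := (hasSum_ite_eq 0 1).summable
  have hφ : Summable fun z : ℤ => ψ z.natAbs :=
    .of_nat_of_neg (by simpa using hψs) (by simpa using hψs)
  calc |∑ n ∈ T, μ.real (⋂ i, Γ (q i n)) - ∑ n ∈ T, ∏ i, μ.real (Γ (q i n))|
      ≤ ∑ n ∈ T, |μ.real (⋂ i, Γ (q i n)) - ∏ i, μ.real (Γ (q i n))| := by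
        rw [← Finset.sum_sub_distrib]
        exact Finset.abs_sum_le_sum_abs _ _
    _ ≤ ∑ n ∈ T, (∑ i, (if q i n = 0 then 1 else 0) +
          ∑ p ∈ Finset.univ.offDiag, ψ ((q p.1 n : ℤ) - q p.2 n).natAbs) := by
        gcongr with n
        exact h.abs_measureReal_iInter_sub_prod_le hψ (q · n)
    _ = ∑ i, ∑ n ∈ T, (if q i n = 0 then 1 else 0) +
          ∑ p ∈ Finset.univ.offDiag, ∑ n ∈ T, ψ ((q p.1 n : ℤ) - q p.2 n).natAbs := by
        rw [Finset.sum_add_distrib, Finset.sum_comm, Finset.sum_comm (s := T)]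
    _ ≤ ∑ _i : ι, K * ∑' k : ℕ, (if k = 0 then (1 : ℝ) else 0) +
          ∑ _p ∈ Finset.univ.offDiag, K * ∑' z : ℤ, ψ z.natAbs := by
        gcongr with i _ p hp
        · exact sum_comp_le_mul_tsum (q i) (D := fun k => if k = 0 then (1 : ℝ) else 0)
            (fun k => by positivity) hδ (hq2 i) T
        · exact sum_comp_le_mul_tsum (fun n => (q p.1 n : ℤ) - q p.2 n)
            (D := fun z => ψ z.natAbs) (fun z => hψ _) hφ
            (hq1 p.1 p.2 (Finset.mem_offDiag.1 hp).2.2) T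
    _ = _ := by simp [tsum_ite_eq, mul_assoc]

end IsPsiMixing

theorem stmt11 {Ω : Type*} [MeasurableSpace Ω] (μ : Measure Ω) [IsProbabilityMeasure μ]
    (Γ : ℕ → Set Ω)
    (ψ : ℕ → ℝ) (hψ : Summable ψ)
    (hmix : ∀ (m k : ℕ) (A B : Set Ω),
      MeasurableSet[MeasurableSpace.generateFrom {S | ∃ j : ℕ, 1 ≤ j ∧ j ≤ m ∧ S = Γ j}] A →
      MeasurableSet[MeasurableSpace.generateFrom {S | ∃ j : ℕ, m + k ≤ j ∧ S = Γ j}] B →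
      μ A ≠ 0 → μ B ≠ 0 →
      |(μ (A ∩ B)).toReal / ((μ A).toReal * (μ B).toReal) - 1| ≤ ψ k)
    (ℓ : ℕ) (q : Fin ℓ → ℕ → ℕ) (K : ℕ)
    (hq1 : ∀ i j : Fin ℓ, i ≠ j → ∀ k : ℤ,
      {n : ℕ | (q i n : ℤ) - (q j n : ℤ) = k}.Finite ∧
      {n : ℕ | (q i n : ℤ) - (q j n : ℤ) = k}.ncard ≤ K)
    (hq2 : ∀ (i : Fin ℓ) (k : ℕ),
      {n : ℕ | q i n = k}.Finite ∧ {n : ℕ | q i n = k}.ncard ≤ K) :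
    (∃ C : ℝ, ∀ N : ℕ,
      |(∑ n ∈ Finset.Icc 1 N, (μ (⋂ i : Fin ℓ, Γ (q i n))).toReal) -
        (∑ n ∈ Finset.Icc 1 N, ∏ i : Fin ℓ, (μ (Γ (q i n))).toReal)| ≤ C) ∧
    (Tendsto (fun N : ℕ =>
        ∑ n ∈ Finset.Icc 1 N, ∏ i : Fin ℓ, (μ (Γ (q i n))).toReal) atTop atTop →
      Tendsto (fun N : ℕ =>
        (∑ n ∈ Finset.Icc 1 N, (μ (⋂ i : Fin ℓ, Γ (q i n))).toReal) /
        (∑ n ∈ Finset.Icc 1 N, ∏ i : Fin ℓ, (μ (Γ (q i n))).toReal)) atTop (nhds 1)) := by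
  have hmix' : IsPsiMixing μ Γ fun k => max (ψ k) 0 :=
    IsPsiMixing.mono hmix fun k => le_max_left _ _
  have hψ' : Summable fun k => max (ψ k) 0 :=
    hψ.abs.of_nonneg_of_le (fun k => le_max_right _ _)
      fun k => max_le (le_abs_self _) (abs_nonneg _)
  have hbound N := hmix'.abs_sum_measureReal_iInter_sub_sum_prod_le
    (fun k => le_max_right _ _) hψ' q hq1 hq2 (Finset.Icc 1 N)
  exact ⟨⟨_, hbound⟩, tendsto_div_nhds_one_of_abs_sub_le hbound⟩
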